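/- The set of pseudo-physical measures of a homeomorphism on a compact metric space is a compact set (in the weak* topology) that contains M(x) for Lebesgue almost every point x, i.e., for Leb-a.e. x, every weak* limit of the empirical measures of x is pseudo-physical. -/

import Mathlib

open MeasureTheory Filter Topology
open scoped ENNReal NNReal

variable {M : Type*} [MetricSpace M] [CompactSpace M] [MeasurableSpace M] [BorelSpace M]

/-- The `n+1`-point empirical (Birkhoff) measure `(1/(n+1)) ∑_{i≤n} δ_{f^i x}`. -/
noncomputable def empMeasure (f : M → M) (x : M) (n : ℕ) : Measure M :=
  ((n + 1 : ℝ≥0∞))⁻¹ • ∑ i ∈ Finset.range (n + 1), Measure.dirac (f^[i] x)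

instance empMeasure.instIsProbabilityMeasure (f : M → M) (x : M) (n : ℕ) :
    IsProbabilityMeasure (empMeasure f x n) := by
  constructor
  simp only [empMeasure, Measure.smul_apply, Measure.finset_sum_apply, smul_eq_mul]
  simp only [Measure.dirac_apply_of_mem (Set.mem_univ _), Finset.sum_const,
    Finset.card_range, nsmul_eq_mul, mul_one]
  push_cast
  rw [ENNReal.inv_mul_cancel (by simp) (by simp)]

/-- Empirical measures as probability measures (with the weak* topology). -/
noncomputable def empProb (f : M → M) (x : M) (n : ℕ) : ProbabilityMeasure M :=
  ⟨empMeasure f x n, inferInstance⟩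

/-- `M(x)`: the set of weak* limit measures of the empirical measures of `x`. -/
def limitMeasures (f : M → M) (x : M) : Set (ProbabilityMeasure M) :=
  {μ | ∃ φ : ℕ → ℕ, StrictMono φ ∧ Tendsto (fun k => empProb f x (φ k)) atTop (𝓝 μ)}

/-- The basin of an invariant measure: points whose empirical measures converge to `μ`. -/
def basin (f : M → M) (μ : ProbabilityMeasure M) : Set M :=
  {x | Tendsto (fun n => empProb f x n) atTop (𝓝 μ)}

/-- `μ` is `f`-invariant. -/
def InvariantMeasure (f : M → M) (μ : ProbabilityMeasure M) : Prop :=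
  Measure.map f μ.toMeasure = μ.toMeasure

/-- Pseudo-physical measure: an invariant measure `μ` such that for every weak*
neighborhood `U` of `μ` (equivalently, every `ε`-ball around `μ` in a metric for the
weak* topology), the set of points `x` with `M(x)` meeting `U`
(i.e. `dist(M(x), μ) < ε`) has positive reference measure. -/
def PseudoPhysical (f : M → M) (Leb : Measure M) (μ : ProbabilityMeasure M) : Prop :=
  InvariantMeasure f μ ∧ ∀ U ∈ 𝓝 μ, 0 < Leb {x | (limitMeasures f x ∩ U).Nonempty}

/-!
The empirical measures of `x` almost commute with `f`: by telescoping,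
`∫ g ∘ f ∂eₙ - ∫ g ∂eₙ = (g (f^[n+1] x) - g x) / (n + 1)`, so every weak* limit of the `eₙ` is
`f`-invariant.  For the almost-everywhere statement, fix a countable basis of the (compact,
metrizable) space of probability measures; the points `x` for which `M(x)` meets a basic open set
`V` whose "reach set" `{x | M(x) ∩ V ≠ ∅}` is null form a countable union of null sets, and off it
every element of `M(x)` is pseudo-physical.  Invariance and the positivity condition are both
closed conditions, so the pseudo-physical measures form a closed subset of a compact space.
-/

open BoundedContinuousFunction

section Empirical

variable {X : Type*} [MeasurableSpace X] [MeasurableSingletonClass X]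

theorem integral_empMeasure (f : X → X) (x : X) (n : ℕ) (g : X → ℝ) :
    ∫ y, g y ∂empMeasure f x n = (n + 1 : ℝ)⁻¹ * ∑ i ∈ Finset.range (n + 1), g (f^[i] x) := by
  rw [empMeasure, integral_smul_measure,
    integral_finsetSum_measure fun _ _ => integrable_dirac enorm_lt_top]
  simp only [integral_dirac, smul_eq_mul, ENNReal.toReal_inv]
  norm_cast

theorem integral_comp_sub_integral_empMeasure (f : X → X) (x : X) (n : ℕ) (g : X → ℝ) :
    ∫ y, g (f y) ∂empMeasure f x n - ∫ y, g y ∂empMeasure f x n =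
      (n + 1 : ℝ)⁻¹ * (g (f^[n + 1] x) - g x) := by
  rw [integral_empMeasure, integral_empMeasure, ← mul_sub, ← Finset.sum_sub_distrib]
  simp_rw [← Function.iterate_succ_apply' f]
  rw [Finset.sum_range_sub (fun i => g (f^[i] x)), Function.iterate_zero_apply]

theorem dist_integral_comp_integral_empMeasure_le [TopologicalSpace X] (f : X → X) (x : X)
    (n : ℕ) (g : X →ᵇ ℝ) :
    dist (∫ y, g (f y) ∂empMeasure f x n) (∫ y, g y ∂empMeasure f x n) ≤ 2 * ‖g‖ / (n + 1) := by
  rw [Real.dist_eq, integral_comp_sub_integral_empMeasure, abs_mul, abs_inv,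
    abs_of_pos (by positivity : (0 : ℝ) < n + 1), inv_mul_eq_div, ← Real.dist_eq]
  gcongr
  exact g.dist_le_two_norm _ _

end Empirical

theorem invariantMeasure_iff_map_eq {X : Type*} [MeasurableSpace X] {f : X → X}
    (hf : Measurable f) (μ : ProbabilityMeasure X) :
    InvariantMeasure f μ ↔ μ.map hf.aemeasurable = μ := by
  rw [InvariantMeasure, ← ProbabilityMeasure.toMeasure_map μ hf.aemeasurable,
    ProbabilityMeasure.toMeasure_injective.eq_iff]

section Invariance

variable {X : Type*} [MetricSpace X] [MeasurableSpace X] [BorelSpace X] {f : X → X}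

theorem isClosed_setOf_invariantMeasure (hf : Continuous f) :
    IsClosed {μ : ProbabilityMeasure X | InvariantMeasure f μ} := by
  simp_rw [invariantMeasure_iff_map_eq hf.measurable]
  exact isClosed_eq (ProbabilityMeasure.continuous_map hf) continuous_id

theorem tendsto_map_empProb_of_tendsto (hf : Continuous f) {x : X} {φ : ℕ → ℕ}
    (hφ : Tendsto φ atTop atTop) {μ : ProbabilityMeasure X}
    (hμ : Tendsto (fun k => empProb f x (φ k)) atTop (𝓝 μ)) :
    Tendsto (fun k => (empProb f x (φ k)).map hf.aemeasurable) atTop (𝓝 μ) := by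
  refine ProbabilityMeasure.tendsto_iff_forall_integral_tendsto.2 fun g => ?_
  refine (ProbabilityMeasure.tendsto_iff_forall_integral_tendsto.1 hμ g).congr_dist ?_
  have hbound : Tendsto (fun k => 2 * ‖g‖ / ((φ k : ℝ) + 1)) atTop (𝓝 0) :=
    tendsto_const_nhds.div_atTop
      (tendsto_atTop_add_const_right _ _ (tendsto_natCast_atTop_atTop.comp hφ))
  refine squeeze_zero (fun _ => dist_nonneg) (fun k => ?_) hbound
  rw [dist_comm, ProbabilityMeasure.toMeasure_map,
    integral_map hf.aemeasurable g.continuous.aestronglyMeasurable]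
  exact dist_integral_comp_integral_empMeasure_le f x (φ k) g

theorem invariantMeasure_of_mem_limitMeasures (hf : Continuous f) {x : X}
    {μ : ProbabilityMeasure X} (hμ : μ ∈ limitMeasures f x) : InvariantMeasure f μ := by
  obtain ⟨φ, hφ, hlim⟩ := hμ
  rw [invariantMeasure_iff_map_eq hf.measurable]
  exact tendsto_nhds_unique (((ProbabilityMeasure.continuous_map hf).tendsto μ).comp hlim)
    (tendsto_map_empProb_of_tendsto hf hφ.tendsto_atTop hlim)

end Invariance

section Reach

variable {α X : Type*} [MeasurableSpace α] [TopologicalSpace X] (L : α → Set X) (ν : Measure α)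

theorem isClosed_setOf_forall_nhds_measure_pos :
    IsClosed {μ : X | ∀ U ∈ 𝓝 μ, 0 < ν {x | (L x ∩ U).Nonempty}} := by
  refine isClosed_iff_nhds.2 fun μ hμ U hU => ?_
  obtain ⟨V, hVU, hVo, hμV⟩ := mem_nhds_iff.1 hU
  obtain ⟨μ', hμ'V, hμ'⟩ := hμ V (hVo.mem_nhds hμV)
  refine (hμ' V (hVo.mem_nhds hμ'V)).trans_le (measure_mono ?_)
  exact fun x ⟨m, hmL, hmV⟩ => ⟨m, hmL, hVU hmV⟩

theorem ae_subset_setOf_forall_nhds_measure_pos [SecondCountableTopology X] :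
    ∀ᵐ x ∂ν, L x ⊆ {μ : X | ∀ U ∈ 𝓝 μ, 0 < ν {x | (L x ∩ U).Nonempty}} := by
  obtain ⟨B, hBc, -, hB⟩ := TopologicalSpace.exists_countable_basis X
  have hreach : ∀ V ∈ B, ∀ᵐ x ∂ν, (L x ∩ V).Nonempty → 0 < ν {x | (L x ∩ V).Nonempty} := by
    intro V _
    by_cases hnull : ν {x | (L x ∩ V).Nonempty} = 0
    · filter_upwards [measure_eq_zero_iff_ae_notMem.1 hnull] with x hx h
      exact absurd h hx
    · exact Eventually.of_forall fun _ _ => pos_iff_ne_zero.2 hnull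
  filter_upwards [(ae_ball_iff hBc).2 hreach] with x hx μ hμ U hU
  obtain ⟨V, hVB, hμV, hVU⟩ := hB.mem_nhds_iff.1 hU
  refine (hx V hVB ⟨μ, hμ, hμV⟩).trans_le (measure_mono ?_)
  exact fun y ⟨m, hmL, hmV⟩ => ⟨m, hmL, hVU hmV⟩

end Reach

theorem pseudoPhysical_isCompact_and_ae_contains_limitMeasures_general
    {M : Type*} [MetricSpace M] [CompactSpace M]
    [MeasurableSpace M] [BorelSpace M]
    (f : M ≃ₜ M) (Leb : Measure M) :
    IsCompact {μ : ProbabilityMeasure M | PseudoPhysical (⇑f) Leb μ} ∧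
      ∀ᵐ x ∂Leb, limitMeasures (⇑f) x ⊆
        {μ : ProbabilityMeasure M | PseudoPhysical (⇑f) Leb μ} := by
  refine ⟨((isClosed_setOf_invariantMeasure f.continuous).inter
    (isClosed_setOf_forall_nhds_measure_pos (limitMeasures f) Leb)).isCompact, ?_⟩
  filter_upwards [ae_subset_setOf_forall_nhds_measure_pos (limitMeasures f) Leb] with x hx μ hμ
  exact ⟨invariantMeasure_of_mem_limitMeasures f.continuous hμ, hx hμ⟩

/-- For a homeomorphism of a compact metric space, the set of
pseudo-physical measures is compact (in the weak* topology) and contains `M(x)`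
for Lebesgue-a.e. point `x`. -/
theorem pseudoPhysical_isCompact_and_ae_contains_limitMeasures
    {M : Type*} [MetricSpace M] [CompactSpace M] [Nonempty M]
    [MeasurableSpace M] [BorelSpace M]
    (f : M ≃ₜ M) (Leb : Measure M) [IsProbabilityMeasure Leb] :
    IsCompact {μ : ProbabilityMeasure M | PseudoPhysical (⇑f) Leb μ} ∧
      ∀ᵐ x ∂Leb, limitMeasures (⇑f) x ⊆
        {μ : ProbabilityMeasure M | PseudoPhysical (⇑f) Leb μ} :=
  pseudoPhysical_isCompact_and_ae_contains_limitMeasures_general f Leb
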